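/- Let T > 0, m ≥ 0. Let a₀, a₁ ∈ C¹(ℝ; ℝ), E₀ ∈ C¹(ℝ; ℝ), and let u, v : ℝ × [0,T] → ℂ be C¹ with, for every t, u(·,t), v(·,t) locally square integrable. Define A₀(x,t) = (a₀(x+t)+a₀(x−t))/2 + (a₁(x+t)−a₁(x−t))/2 − (1/2)∫₀^t ∫_{x−(t−s)}^{x+(t−s)} (|u|²+|v|²)(y,s) dy ds and A₁(x,t) = (a₀(x+t)−a₀(x−t))/2 + (a₁(x+t)+a₁(x−t))/2 − (1/2)∫_{x−t}^{x+t} E₀(y) dy + (1/2)∫₀^t ∫_{x−(t−s)}^{x+(t−s)} (|u|²−|v|²)(y,s) dy ds. Suppose u, v solve the Dirac system (∂_t + ∂_x)u = −imv + i(A₀+A₁)u + 2i|v|²u + 2i Re(u v̄)v and (∂_t − ∂_x)v = −imu + i(A₀−A₁)v + 2i|u|²v + 2i Re(u v̄)u on ℝ × [0,T], and that the Gauss law holds initially: (d/dx)E₀(x) = |u(x,0)|² + |v(x,0)|² for all x ∈ ℝ. Then the Lorenz gauge condition ∂_t A₀ = ∂_x A₁ holds on ℝ × (0,T). -/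

import Mathlib

/-!
The density `ρ = |u|² + |v|²` and current `j = |u|² - |v|²` of a solution of the Dirac system
obey the continuity equation `∂ₜρ + ∂ₓj = 0`: pairing the right-hand sides with `u` and `v`
gives purely imaginary numbers. Differentiating D'Alembert's formulas, the free parts of
`∂ₜA₀` and `∂ₓA₁` agree, and `∂ₜA₀ - ∂ₓA₁ = (E₀(x+t) - E₀(x-t) - Φ) / 2`, where `Φ` is the
flux of `(ρ, j)` through the two null sides of the backward light cone from `(x, t)`.
Integrating the continuity equation over that cone gives `Φ = ∫_{x-t}^{x+t} ρ(y, 0) dy`, which is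
`E₀(x+t) - E₀(x-t)` by the initial Gauss law.
-/

open MeasureTheory Set

/-- The Dirac (spinor) part of the Maxwell–Dirac–Thirring–Gross–Neveu system on the
time slab `ℝ × [0,T]`, in null-coordinate form, with all coupling constants equal to `1`
and mass `m`:
`(∂_t + ∂_x)u = −imv + i(A₀+A₁)u + 2i|v|²u + 2i Re(u v̄)v`,
`(∂_t − ∂_x)v = −imu + i(A₀−A₁)v + 2i|u|²v + 2i Re(u v̄)u`. -/
def DiracSystem (m T : ℝ) (A₀ A₁ : ℝ → ℝ → ℝ) (u v : ℝ → ℝ → ℂ) : Prop :=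
  ∀ x : ℝ, ∀ t ∈ Set.Icc (0:ℝ) T,
    (deriv (fun τ => u x τ) t + deriv (fun ξ => u ξ t) x =
      -Complex.I * (m : ℂ) * v x t
      + Complex.I * ((A₀ x t + A₁ x t : ℝ) : ℂ) * u x t
      + 2 * Complex.I * ((‖v x t‖ ^ 2 : ℝ) : ℂ) * u x t
      + 2 * Complex.I * (((u x t * (starRingEnd ℂ) (v x t)).re : ℝ) : ℂ) * v x t)
    ∧
    (deriv (fun τ => v x τ) t - deriv (fun ξ => v ξ t) x =
      -Complex.I * (m : ℂ) * u x t
      + Complex.I * ((A₀ x t - A₁ x t : ℝ) : ℂ) * v x t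
      + 2 * Complex.I * ((‖u x t‖ ^ 2 : ℝ) : ℂ) * v x t
      + 2 * Complex.I * (((u x t * (starRingEnd ℂ) (v x t)).re : ℝ) : ℂ) * u x t)

open Function

section Leibniz

variable {E : Type*} [NormedAddCommGroup E] [NormedSpace ℝ E] {F F' : ℝ → ℝ → E}

theorem hasDerivAt_intervalIntegral_of_hasDerivAt_param (hF : Continuous (uncurry F))
    (hF' : Continuous (uncurry F')) (hd : ∀ r s, HasDerivAt (F · s) (F' r s) r) (a b r₀ : ℝ) :
    HasDerivAt (fun r => ∫ s in a..b, F r s) (∫ s in a..b, F' r₀ s) r₀ := by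
  obtain ⟨C, hC⟩ := (isCompact_closedBall r₀ 1 |>.prod isCompact_uIcc).exists_bound_of_continuousOn
    hF'.continuousOn
  exact (intervalIntegral.hasDerivAt_integral_of_dominated_loc_of_deriv_le
    (bound := fun _ => C) (Metric.ball_mem_nhds r₀ one_pos)
    (.of_forall fun r => (hF.comp (Continuous.prodMk_right r)).aestronglyMeasurable)
    ((hF.comp (Continuous.prodMk_right r₀)).intervalIntegrable a b)
    (hF'.comp (Continuous.prodMk_right r₀)).aestronglyMeasurable
    (.of_forall fun s hs r hr =>
      hC (r, s) ⟨Metric.ball_subset_closedBall hr, uIoc_subset_uIcc hs⟩)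
    intervalIntegrable_const (.of_forall fun s _ r _ => hd r s)).2

theorem hasDerivAt_intervalIntegral_param_upper [CompleteSpace E] (hF : Continuous (uncurry F))
    (hF' : Continuous (uncurry F')) (hd : ∀ r s, HasDerivAt (F · s) (F' r s) r) (a : ℝ)
    {e : ℝ → ℝ} {e' r₀ : ℝ} (he : HasDerivAt e e' r₀) :
    HasDerivAt (fun r => ∫ s in a..e r, F r s) (e' • F r₀ (e r₀) + ∫ s in a..e r₀, F' r₀ s) r₀ := by
  set f₁ : ℝ → ℝ → ℝ →L[ℝ] E := fun r b => (1 : ℝ →L[ℝ] ℝ).smulRight (∫ s in a..b, F' r s)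
  set f₂ : ℝ → ℝ → ℝ →L[ℝ] E := fun r b => (1 : ℝ →L[ℝ] ℝ).smulRight (F r b)
  have df₁ : ∀ p : ℝ × ℝ, HasFDerivAt (fun r => ∫ s in a..p.2, F r s) (↿f₁ p) p.1 := fun p =>
    (hasDerivAt_intervalIntegral_of_hasDerivAt_param hF hF' hd a p.2 p.1).hasFDerivAt
  have df₂ : ∀ p : ℝ × ℝ, HasFDerivAt (fun b => ∫ s in a..b, F p.1 s) (↿f₂ p) p.2 := fun p =>
    have hc : Continuous (F p.1) := hF.comp (Continuous.prodMk_right p.1)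
    (intervalIntegral.integral_hasDerivAt_right (hc.intervalIntegrable _ _)
      (hc.stronglyMeasurableAtFilter _ _) hc.continuousAt).hasFDerivAt
  have cf₁ : Continuous ↿f₁ := (ContinuousLinearMap.smulRightL ℝ ℝ E 1).continuous.comp
    (intervalIntegral.continuous_parametric_intervalIntegral_of_continuous
      (f := fun (p : ℝ × ℝ) (s : ℝ) => F' p.1 s)
      (hF'.comp (by fun_prop : Continuous fun q : (ℝ × ℝ) × ℝ => (q.1.1, q.2))) continuous_snd)
  have cf₂ : Continuous ↿f₂ := (ContinuousLinearMap.smulRightL ℝ ℝ E 1).continuous.comp hF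
  have hΦ := hasStrictFDerivAt_uncurry_coprod (f := fun r b => ∫ s in a..b, F r s)
    (u := (r₀, e r₀)) (.of_forall df₁) (.of_forall df₂) cf₁.continuousAt cf₂.continuousAt
  have := hΦ.hasFDerivAt.comp_hasDerivAt r₀ ((hasDerivAt_id r₀).prodMk he)
  refine this.congr_deriv ?_
  change (f₁ r₀ (e r₀)).coprod (f₂ r₀ (e r₀)) (1, e') = _
  simp [f₁, f₂, add_comm]

theorem hasDerivAt_intervalIntegral_param [CompleteSpace E] (hF : Continuous (uncurry F))
    (hF' : Continuous (uncurry F')) (hd : ∀ r s, HasDerivAt (F · s) (F' r s) r)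
    {e₁ e₂ : ℝ → ℝ} {e₁' e₂' r₀ : ℝ} (he₁ : HasDerivAt e₁ e₁' r₀) (he₂ : HasDerivAt e₂ e₂' r₀) :
    HasDerivAt (fun r => ∫ s in e₁ r..e₂ r, F r s)
      (e₂' • F r₀ (e₂ r₀) - e₁' • F r₀ (e₁ r₀) + ∫ s in e₁ r₀..e₂ r₀, F' r₀ s) r₀ := by
  have hI : ∀ {G : ℝ → ℝ → E}, Continuous (uncurry G) → ∀ r, ∫ s in e₁ r..e₂ r, G r s =
      (∫ s in (0:ℝ)..e₂ r, G r s) - ∫ s in (0:ℝ)..e₁ r, G r s := fun hG r =>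
    have hc := hG.comp (Continuous.prodMk_right r)
    (intervalIntegral.integral_interval_sub_left (hc.intervalIntegrable _ _)
      (hc.intervalIntegrable _ _)).symm
  rw [funext (hI hF), hI hF']
  exact ((hasDerivAt_intervalIntegral_param_upper hF hF' hd 0 he₂).fun_sub
    (hasDerivAt_intervalIntegral_param_upper hF hF' hd 0 he₁)).congr_deriv (by abel)

theorem hasDerivAt_intervalIntegral_bounds [CompleteSpace E] {f : ℝ → E} (hf : Continuous f)
    {e₁ e₂ : ℝ → ℝ} {e₁' e₂' r₀ : ℝ} (he₁ : HasDerivAt e₁ e₁' r₀) (he₂ : HasDerivAt e₂ e₂' r₀) :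
    HasDerivAt (fun r => ∫ s in e₁ r..e₂ r, f s) (e₂' • f (e₂ r₀) - e₁' • f (e₁ r₀)) r₀ := by
  simpa using hasDerivAt_intervalIntegral_param (F := fun _ => f) (F' := fun _ _ => 0)
    (hf.comp continuous_snd) continuous_const (fun r _ => hasDerivAt_const r _) he₁ he₂

end Leibniz

section Slices

variable {E : Type*} [NormedAddCommGroup E] [NormedSpace ℝ E] {f : ℝ → ℝ → E}

theorem ContDiff.hasDerivAt_slice_fst (hf : ContDiff ℝ 1 (uncurry f)) (x t : ℝ) :
    HasDerivAt (f · t) (deriv (f · t) x) x :=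
  ((hf.differentiable one_ne_zero).comp (differentiable_id.prodMk (differentiable_const t))
    x).hasDerivAt

theorem ContDiff.hasDerivAt_slice_snd (hf : ContDiff ℝ 1 (uncurry f)) (x t : ℝ) :
    HasDerivAt (f x ·) (deriv (f x ·) t) t :=
  ((hf.differentiable one_ne_zero).comp ((differentiable_const x).prodMk differentiable_id)
    t).hasDerivAt

theorem ContDiff.continuous_deriv_slice_fst (hf : ContDiff ℝ 1 (uncurry f)) :
    Continuous fun p : ℝ × ℝ => deriv (f · p.2) p.1 := by
  have h : ∀ x t, deriv (f · t) x = fderiv ℝ (uncurry f) (x, t) (1, 0) := fun x t =>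
    HasDerivAt.deriv <| HasFDerivAt.comp_hasDerivAt (l := uncurry f) x
      (hf.differentiable one_ne_zero (x, t)).hasFDerivAt
      ((hasDerivAt_id' x).prodMk (hasDerivAt_const x t))
  simp only [h]
  exact (hf.continuous_fderiv one_ne_zero).clm_apply continuous_const

theorem ContDiff.continuous_deriv_slice_snd (hf : ContDiff ℝ 1 (uncurry f)) :
    Continuous fun p : ℝ × ℝ => deriv (f p.1 ·) p.2 := by
  have h : ∀ x t, deriv (f x ·) t = fderiv ℝ (uncurry f) (x, t) (0, 1) := fun x t =>
    HasDerivAt.deriv <| HasFDerivAt.comp_hasDerivAt (l := uncurry f) t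
      (hf.differentiable one_ne_zero (x, t)).hasFDerivAt
      ((hasDerivAt_const t x).prodMk (hasDerivAt_id' t))
  simp only [h]
  exact (hf.continuous_fderiv one_ne_zero).clm_apply continuous_const

end Slices

section Duhamel

variable {E : Type*} [NormedAddCommGroup E] [NormedSpace ℝ E] {f : ℝ → ℝ → E}

/-- `(1/2) • duhamelIntegral f` solves `□w = f` with zero Cauchy data. -/
noncomputable def duhamelIntegral (f : ℝ → ℝ → E) (x t : ℝ) : E :=
  ∫ s in (0:ℝ)..t, ∫ y in (x - (t - s))..(x + (t - s)), f y s

theorem continuous_intervalIntegral_comp {X : Type*} [TopologicalSpace X]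
    (hf : Continuous (uncurry f)) {g₁ g₂ h : X → ℝ} (hg₁ : Continuous g₁) (hg₂ : Continuous g₂)
    (hh : Continuous h) : Continuous fun p => ∫ y in g₁ p..g₂ p, f y (h p) := by
  have hF : Continuous (uncurry fun p y => f y (h p)) :=
    hf.comp (continuous_snd.prodMk (hh.comp continuous_fst))
  have hc : ∀ p, Continuous fun y => f y (h p) := fun p => hF.comp (Continuous.prodMk_right p)
  simp_rw [← intervalIntegral.integral_interval_sub_left ((hc _).intervalIntegrable 0 (g₂ _))
    ((hc _).intervalIntegrable 0 (g₁ _))]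
  exact (intervalIntegral.continuous_parametric_intervalIntegral_of_continuous hF hg₂).sub
    (intervalIntegral.continuous_parametric_intervalIntegral_of_continuous hF hg₁)

theorem hasDerivAt_duhamelIntegral_time [CompleteSpace E] (hf : Continuous (uncurry f))
    (x t : ℝ) :
    HasDerivAt (duhamelIntegral f x)
      (∫ s in (0:ℝ)..t, (f (x + (t - s)) s + f (x - (t - s)) s)) t := by
  have hF : Continuous (uncurry fun τ s => ∫ y in (x - (τ - s))..(x + (τ - s)), f y s) :=
    continuous_intervalIntegral_comp hf (by fun_prop) (by fun_prop) continuous_snd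
  have hF' : Continuous (uncurry fun τ s => f (x + (τ - s)) s + f (x - (τ - s)) s) := by
    have : Continuous fun p : ℝ × ℝ => f p.1 p.2 := hf
    unfold uncurry
    fun_prop
  have hd : ∀ τ s, HasDerivAt (fun q => ∫ y in (x - (q - s))..(x + (q - s)), f y s)
      (f (x + (τ - s)) s + f (x - (τ - s)) s) τ := fun τ s => by
    simpa using hasDerivAt_intervalIntegral_bounds (hf.comp (Continuous.prodMk_left s))
      (((hasDerivAt_id τ).sub_const s).const_sub x) (((hasDerivAt_id τ).sub_const s).const_add x)
  exact (hasDerivAt_intervalIntegral_param_upper hF hF' hd 0 (hasDerivAt_id t)).congr_deriv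
    (by simp)

theorem hasDerivAt_duhamelIntegral_space [CompleteSpace E] (hf : Continuous (uncurry f))
    (x t : ℝ) :
    HasDerivAt (duhamelIntegral f · t)
      (∫ s in (0:ℝ)..t, (f (x + (t - s)) s - f (x - (t - s)) s)) x := by
  have hF : Continuous (uncurry fun ξ s => ∫ y in (ξ - (t - s))..(ξ + (t - s)), f y s) :=
    continuous_intervalIntegral_comp hf (by fun_prop) (by fun_prop) continuous_snd
  have hF' : Continuous (uncurry fun ξ s => f (ξ + (t - s)) s - f (ξ - (t - s)) s) := by
    have : Continuous fun p : ℝ × ℝ => f p.1 p.2 := hf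
    unfold uncurry
    fun_prop
  have hd : ∀ ξ s, HasDerivAt (fun q => ∫ y in (q - (t - s))..(q + (t - s)), f y s)
      (f (ξ + (t - s)) s - f (ξ - (t - s)) s) ξ := fun ξ s => by
    simpa using hasDerivAt_intervalIntegral_bounds (hf.comp (Continuous.prodMk_left s))
      ((hasDerivAt_id ξ).sub_const _) ((hasDerivAt_id ξ).add_const _)
  exact hasDerivAt_intervalIntegral_of_hasDerivAt_param hF hF' hd 0 t x

end Duhamel

theorem intervalIntegral_eq_lightCone_flux {ρ j : ℝ → ℝ → ℝ} (hρ : ContDiff ℝ 1 (uncurry ρ))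
    (hj : ContDiff ℝ 1 (uncurry j)) {t : ℝ} (ht : 0 ≤ t)
    (hcons : ∀ y, ∀ s ∈ Icc 0 t, deriv (ρ y ·) s + deriv (j · s) y = 0) (x : ℝ) :
    ∫ y in (x - t)..(x + t), ρ y 0 = ∫ s in (0:ℝ)..t,
      (ρ (x + (t - s)) s + ρ (x - (t - s)) s + (j (x + (t - s)) s - j (x - (t - s)) s)) := by
  have hρc : Continuous fun p : ℝ × ℝ => ρ p.1 p.2 := hρ.continuous
  have hjc : Continuous fun p : ℝ × ℝ => j p.1 p.2 := hj.continuous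
  have hK : ∀ s ∈ uIcc 0 t, HasDerivAt (fun s => ∫ y in (x - (t - s))..(x + (t - s)), ρ y s)
      (-(ρ (x + (t - s)) s + ρ (x - (t - s)) s + (j (x + (t - s)) s - j (x - (t - s)) s))) s := by
    intro s hs
    rw [uIcc_of_le ht] at hs
    have hρ_t : ∫ y in (x - (t - s))..(x + (t - s)), deriv (ρ y ·) s
        = -(j (x + (t - s)) s - j (x - (t - s)) s) := by
      rw [intervalIntegral.integral_congr fun y _ => eq_neg_of_add_eq_zero_left (hcons y s hs),
        intervalIntegral.integral_neg, intervalIntegral.integral_eq_sub_of_hasDerivAt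
          (fun y _ => hj.hasDerivAt_slice_fst y s)
          ((hj.continuous_deriv_slice_fst.comp (Continuous.prodMk_left s)).intervalIntegrable _ _)]
    refine (hasDerivAt_intervalIntegral_param (F := fun s y => ρ y s)
      (F' := fun s y => deriv (ρ y ·) s) (hρc.comp continuous_swap)
      (hρ.continuous_deriv_slice_snd.comp continuous_swap) (fun r y => hρ.hasDerivAt_slice_snd y r)
      (((hasDerivAt_id' s).const_sub t).const_sub x)
      (((hasDerivAt_id' s).const_sub t).const_add x)).congr_deriv ?_
    rw [hρ_t]
    simp only [smul_eq_mul]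
    ring
  have hFTC := intervalIntegral.integral_eq_sub_of_hasDerivAt hK
    (Continuous.intervalIntegrable ?_ 0 t)
  · simp only [sub_self, add_zero, sub_zero, intervalIntegral.integral_same,
      intervalIntegral.integral_neg] at hFTC
    linarith
  · fun_prop

theorem inner_dirac_nonlinearity_add_eq_zero (z w : ℂ) (m r₁ r₂ : ℝ) :
    inner ℝ z (-Complex.I * (m : ℂ) * w + Complex.I * ((r₁ : ℝ) : ℂ) * z
      + 2 * Complex.I * ((‖w‖ ^ 2 : ℝ) : ℂ) * z
      + 2 * Complex.I * (((z * (starRingEnd ℂ) w).re : ℝ) : ℂ) * w)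
    + inner ℝ w (-Complex.I * (m : ℂ) * z + Complex.I * ((r₂ : ℝ) : ℂ) * w
      + 2 * Complex.I * ((‖z‖ ^ 2 : ℝ) : ℂ) * w
      + 2 * Complex.I * (((z * (starRingEnd ℂ) w).re : ℝ) : ℂ) * z) = 0 := by
  -- `i r z` pairs to zero with `z`; the mass terms and the `Re (z w̄)` terms cancel between the
  -- two pairings because `Im (w z̄) = -Im (z w̄)`.
  simp only [neg_mul, Complex.sq_norm, Complex.normSq_apply, Complex.ofReal_add, Complex.ofReal_mul,
    Complex.mul_re, Complex.conj_re, Complex.conj_im, mul_neg, sub_neg_eq_add, Complex.inner,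
    Complex.add_re, Complex.neg_re, Complex.I_re, Complex.ofReal_re, zero_mul, Complex.I_im,
    Complex.ofReal_im, mul_zero, sub_self, Complex.mul_im, one_mul, zero_add, zero_sub, neg_neg,
    Complex.re_ofNat, Complex.im_ofNat, mul_one, sub_zero, add_zero, Complex.add_im, Complex.neg_im]
  ring

theorem DiracSystem.deriv_charge_add_deriv_current {m T : ℝ} {A₀ A₁ : ℝ → ℝ → ℝ}
    {u v : ℝ → ℝ → ℂ} (hsol : DiracSystem m T A₀ A₁ u v) (hu : ContDiff ℝ 1 (uncurry u))
    (hv : ContDiff ℝ 1 (uncurry v)) (x : ℝ) {t : ℝ} (ht : t ∈ Icc 0 T) :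
    deriv (fun s => ‖u x s‖ ^ 2 + ‖v x s‖ ^ 2) t
      + deriv (fun y => ‖u y t‖ ^ 2 - ‖v y t‖ ^ 2) x = 0 := by
  obtain ⟨hu_eq, hv_eq⟩ := hsol x t ht
  have key := inner_dirac_nonlinearity_add_eq_zero (u x t) (v x t) m
    (A₀ x t + A₁ x t) (A₀ x t - A₁ x t)
  rw [← hu_eq, ← hv_eq, inner_add_right, inner_sub_right] at key
  rw [((hu.hasDerivAt_slice_snd x t).norm_sq.fun_add (hv.hasDerivAt_slice_snd x t).norm_sq).deriv,
    ((hu.hasDerivAt_slice_fst x t).norm_sq.fun_sub (hv.hasDerivAt_slice_fst x t).norm_sq).deriv]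
  linarith

section FreeWave

variable {a₀ a₁ : ℝ → ℝ}

theorem hasDerivAt_dAlembert_time (ha₀ : ContDiff ℝ 1 a₀) (ha₁ : ContDiff ℝ 1 a₁) (x t : ℝ) :
    HasDerivAt (fun τ => (a₀ (x + τ) + a₀ (x - τ)) / 2 + (a₁ (x + τ) - a₁ (x - τ)) / 2)
      ((deriv a₀ (x + t) - deriv a₀ (x - t)) / 2 + (deriv a₁ (x + t) + deriv a₁ (x - t)) / 2)
      t := by
  have hd₀ := fun z => (ha₀.differentiable one_ne_zero z).hasDerivAt
  have hd₁ := fun z => (ha₁.differentiable one_ne_zero z).hasDerivAt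
  exact ((((hd₀ _).comp_const_add x t).add ((hd₀ _).comp_const_sub x t)).div_const 2 |>.add <|
    (((hd₁ _).comp_const_add x t).sub ((hd₁ _).comp_const_sub x t)).div_const 2).congr_deriv
      (by ring)

theorem hasDerivAt_dAlembert_space (ha₀ : ContDiff ℝ 1 a₀) (ha₁ : ContDiff ℝ 1 a₁) (x t : ℝ) :
    HasDerivAt (fun ξ => (a₀ (ξ + t) - a₀ (ξ - t)) / 2 + (a₁ (ξ + t) + a₁ (ξ - t)) / 2)
      ((deriv a₀ (x + t) - deriv a₀ (x - t)) / 2 + (deriv a₁ (x + t) + deriv a₁ (x - t)) / 2)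
      x := by
  have hd₀ := fun z => (ha₀.differentiable one_ne_zero z).hasDerivAt
  have hd₁ := fun z => (ha₁.differentiable one_ne_zero z).hasDerivAt
  exact (((hd₀ _).comp_add_const x t).sub ((hd₀ _).comp_sub_const x t)).div_const 2 |>.add <|
    (((hd₁ _).comp_add_const x t).add ((hd₁ _).comp_sub_const x t)).div_const 2

end FreeWave

theorem lorenz_gauge_propagation_general (T m : ℝ)
    (a₀ a₁ E₀ : ℝ → ℝ)
    (ha₀ : ContDiff ℝ 1 a₀) (ha₁ : ContDiff ℝ 1 a₁) (hE₀ : ContDiff ℝ 1 E₀)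
    (u v : ℝ → ℝ → ℂ)
    (hu : ContDiff ℝ 1 (Function.uncurry u)) (hv : ContDiff ℝ 1 (Function.uncurry v))
    (A₀ A₁ : ℝ → ℝ → ℝ)
    (hA₀ : ∀ x t : ℝ, A₀ x t =
      (a₀ (x + t) + a₀ (x - t)) / 2 + (a₁ (x + t) - a₁ (x - t)) / 2
      - (1/2) * ∫ s in (0:ℝ)..t, ∫ y in (x - (t - s))..(x + (t - s)),
          (‖u y s‖ ^ 2 + ‖v y s‖ ^ 2))
    (hA₁ : ∀ x t : ℝ, A₁ x t =
      (a₀ (x + t) - a₀ (x - t)) / 2 + (a₁ (x + t) + a₁ (x - t)) / 2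
      - (1/2) * (∫ y in (x - t)..(x + t), E₀ y)
      + (1/2) * ∫ s in (0:ℝ)..t, ∫ y in (x - (t - s))..(x + (t - s)),
          (‖u y s‖ ^ 2 - ‖v y s‖ ^ 2))
    (hsol : DiracSystem m T A₀ A₁ u v)
    (hGauss : ∀ x : ℝ, deriv E₀ x = ‖u x 0‖ ^ 2 + ‖v x 0‖ ^ 2) :
    ∀ x : ℝ, ∀ t ∈ Set.Ioo (0:ℝ) T,
      deriv (fun τ => A₀ x τ) t = deriv (fun ξ => A₁ ξ t) x := by
  intro x t ht
  have hρ : ContDiff ℝ 1 (uncurry fun y s => ‖u y s‖ ^ 2 + ‖v y s‖ ^ 2) :=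
    ((contDiff_norm_sq ℝ).comp hu).add ((contDiff_norm_sq ℝ).comp hv)
  have hj : ContDiff ℝ 1 (uncurry fun y s => ‖u y s‖ ^ 2 - ‖v y s‖ ^ 2) :=
    ((contDiff_norm_sq ℝ).comp hu).sub ((contDiff_norm_sq ℝ).comp hv)
  have hflux := intervalIntegral_eq_lightCone_flux hρ hj ht.1.le
    (fun y s hs => hsol.deriv_charge_add_deriv_current hu hv y ⟨hs.1, hs.2.trans ht.2.le⟩) x
  have hcharge : ∫ y in (x - t)..(x + t), (‖u y 0‖ ^ 2 + ‖v y 0‖ ^ 2)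
      = E₀ (x + t) - E₀ (x - t) := by
    simp only [← hGauss]
    exact intervalIntegral.integral_deriv_eq_sub (fun y _ => hE₀.differentiable one_ne_zero y)
      ((hE₀.continuous_deriv le_rfl).intervalIntegrable _ _)
  have hdA₀ := (hasDerivAt_dAlembert_time ha₀ ha₁ x t).sub
      ((hasDerivAt_duhamelIntegral_time hρ.continuous x t).const_mul (1 / 2))
    |>.congr_of_eventuallyEq (f₁ := fun τ => A₀ x τ) (.of_forall fun τ => hA₀ x τ)
  have hdA₁ := ((hasDerivAt_dAlembert_space ha₀ ha₁ x t).sub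
      ((hasDerivAt_intervalIntegral_bounds hE₀.continuous ((hasDerivAt_id' x).sub_const t)
        ((hasDerivAt_id' x).add_const t)).const_mul (1 / 2))).add
      ((hasDerivAt_duhamelIntegral_space hj.continuous x t).const_mul (1 / 2))
    |>.congr_of_eventuallyEq (f₁ := fun ξ => A₁ ξ t) (.of_forall fun ξ => hA₁ ξ t)
  have huc : Continuous fun p : ℝ × ℝ => u p.1 p.2 := hu.continuous
  have hvc : Continuous fun p : ℝ × ℝ => v p.1 p.2 := hv.continuous
  rw [hcharge, intervalIntegral.integral_add (Continuous.intervalIntegrable (by fun_prop) _ _)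
    (Continuous.intervalIntegrable (by fun_prop) _ _)] at hflux
  rw [hdA₀.deriv, hdA₁.deriv]
  simp only [one_smul]
  linarith

/-- If the potentials `A₀, A₁` are given by D'Alembert's formulas with charge-density
sources, `u, v` solve the Dirac system, and the Gauss law `E₀′ = |u(·,0)|² + |v(·,0)|²`
holds initially, then the Lorenz gauge condition `∂_t A₀ = ∂_x A₁` holds on `ℝ × (0,T)`. -/
theorem lorenz_gauge_propagation (T m : ℝ) (hT : 0 < T) (hm : 0 ≤ m)
    (a₀ a₁ E₀ : ℝ → ℝ)
    (ha₀ : ContDiff ℝ 1 a₀) (ha₁ : ContDiff ℝ 1 a₁) (hE₀ : ContDiff ℝ 1 E₀)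
    (u v : ℝ → ℝ → ℂ)
    (hu : ContDiff ℝ 1 (Function.uncurry u)) (hv : ContDiff ℝ 1 (Function.uncurry v))
    (huloc : ∀ t : ℝ, LocallyIntegrable (fun x => ‖u x t‖ ^ 2) (volume : Measure ℝ))
    (hvloc : ∀ t : ℝ, LocallyIntegrable (fun x => ‖v x t‖ ^ 2) (volume : Measure ℝ))
    (A₀ A₁ : ℝ → ℝ → ℝ)
    (hA₀ : ∀ x t : ℝ, A₀ x t =
      (a₀ (x + t) + a₀ (x - t)) / 2 + (a₁ (x + t) - a₁ (x - t)) / 2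
      - (1/2) * ∫ s in (0:ℝ)..t, ∫ y in (x - (t - s))..(x + (t - s)),
          (‖u y s‖ ^ 2 + ‖v y s‖ ^ 2))
    (hA₁ : ∀ x t : ℝ, A₁ x t =
      (a₀ (x + t) - a₀ (x - t)) / 2 + (a₁ (x + t) + a₁ (x - t)) / 2
      - (1/2) * (∫ y in (x - t)..(x + t), E₀ y)
      + (1/2) * ∫ s in (0:ℝ)..t, ∫ y in (x - (t - s))..(x + (t - s)),
          (‖u y s‖ ^ 2 - ‖v y s‖ ^ 2))
    (hsol : DiracSystem m T A₀ A₁ u v)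
    (hGauss : ∀ x : ℝ, deriv E₀ x = ‖u x 0‖ ^ 2 + ‖v x 0‖ ^ 2) :
    ∀ x : ℝ, ∀ t ∈ Set.Ioo (0:ℝ) T,
      deriv (fun τ => A₀ x τ) t = deriv (fun ξ => A₁ ξ t) x :=
  lorenz_gauge_propagation_general T m a₀ a₁ E₀ ha₀ ha₁ hE₀ u v hu hv A₀ A₁ hA₀ hA₁ hsol hGauss
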